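/- Let A be an n×n irreducible Stieltjes matrix with smallest eigenvalue μ. Suppose each f_i maps [0,∞) into [0,∞), is continuously differentiable on [0,∞), satisfies f_i(t)/t → 0 as t → 0⁺ and f_i(t)/t → ∞ as t → ∞, and satisfies f_i(s)/s < f_i(t)/t whenever 0 < s < t. Then for every r > 0 there exist λ > μ and x ∈ ℝⁿ with all components x_i > 0 such that A x + F(x) = λ x and the Euclidean norm ‖x‖ = r; moreover the pair (λ, x) with these properties is unique. -/

import Mathlib

/-!
Existence is variational. Let `g i` be the odd extension of `f i` and minimise the energy
`E y = (y ⬝ᵥ A *ᵥ y) / 2 + ∑ i, ∫ t in 0..y i, g i t` over the sphere `y ⬝ᵥ y = r²`. The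
primitives of the `g i` are even and the off-diagonal entries of `A` are nonpositive, so `|y|`
is a minimiser whenever `y` is; a Lagrange multiplier turns it into a nonnegative solution of
`A x + F x = λ x`, and irreducibility makes it positive. Pairing the equation with `x` gives
`λ r² = x ⬝ᵥ A *ᵥ x + F x ⬝ᵥ x > μ r²`, the Rayleigh quotient of `A` being at least `μ`.

Uniqueness is a comparison argument. For two positive solutions `(λ, x)`, `(λ', y)` with
`λ ≤ λ'`, let `t` be the largest ratio `x k / y k`. Since `A` is a Z-matrix, the `k`-th equations
give `f k (t * y k) ≤ t * f k (y k)`, so `t ≤ 1` by the monotonicity of `f k s / s`, with strict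
inequality when `λ < λ'`. Hence `x ≤ y`, and `x < y` when `λ < λ'`, which is impossible for
vectors of the same norm.
-/

open Set Filter Matrix

lemma apply_zero_eq_zero_of_tendsto_div {f : ℝ → ℝ} (hf : ContinuousWithinAt f (Ioi 0) 0)
    (hlim : Tendsto (fun t => f t / t) (nhdsWithin 0 (Ioi 0)) (nhds 0)) : f 0 = 0 := by
  have h := hlim.mul (tendsto_id.mono_left (nhdsWithin_le_nhds (s := Ioi (0 : ℝ))))
  rw [zero_mul] at h
  refine tendsto_nhds_unique hf (h.congr' ?_)
  filter_upwards [self_mem_nhdsWithin] with t (ht : 0 < t)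
  exact div_mul_cancel₀ _ ht.ne'

lemma pos_of_strictMonoOn_div {f : ℝ → ℝ} (hf : StrictMonoOn (fun t => f t / t) (Ioi 0))
    (hnn : ∀ t, 0 ≤ t → 0 ≤ f t) {t : ℝ} (ht : 0 < t) : 0 < f t := by
  have h : f (t / 2) / (t / 2) < f t / t := hf (half_pos ht) ht (half_lt_self ht)
  exact (div_pos_iff_of_pos_right ht).1
    ((div_nonneg (hnn _ (half_pos ht).le) (half_pos ht).le).trans_lt h)

section Ratio

variable {f : ℝ → ℝ} (hf : StrictMonoOn (fun t => f t / t) (Ioi 0)) {s t : ℝ}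
include hf

lemma apply_mul_le_mul_apply_iff (hs : 0 < s) (ht : 0 < t) : f (t * s) ≤ t * f s ↔ t ≤ 1 :=
  calc f (t * s) ≤ t * f s ↔ f (t * s) / (t * s) ≤ f s / s := by
        rw [div_le_div_iff₀ (mul_pos ht hs) hs, show f s * (t * s) = t * f s * s by ring,
          mul_le_mul_iff_of_pos_right hs]
    _ ↔ t * s ≤ s := hf.le_iff_le (mul_pos ht hs) hs
    _ ↔ t ≤ 1 := mul_le_iff_le_one_left hs

lemma apply_mul_lt_mul_apply_iff (hs : 0 < s) (ht : 0 < t) : f (t * s) < t * f s ↔ t < 1 :=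
  calc f (t * s) < t * f s ↔ f (t * s) / (t * s) < f s / s := by
        rw [div_lt_div_iff₀ (mul_pos ht hs) hs, show f s * (t * s) = t * f s * s by ring,
          mul_lt_mul_iff_of_pos_right hs]
    _ ↔ t * s < s := hf.lt_iff_lt (mul_pos ht hs) hs
    _ ↔ t < 1 := mul_lt_iff_lt_one_left hs

end Ratio

noncomputable def oddExtension (f : ℝ → ℝ) (t : ℝ) : ℝ := f (max t 0) - f (max (-t) 0)

lemma oddExtension_neg (f : ℝ → ℝ) (t : ℝ) : oddExtension f (-t) = -oddExtension f t := by
  simp [oddExtension]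

lemma oddExtension_of_nonneg {f : ℝ → ℝ} (hf0 : f 0 = 0) {t : ℝ} (ht : 0 ≤ t) :
    oddExtension f t = f t := by
  simp [oddExtension, ht, hf0]

lemma continuous_oddExtension {f : ℝ → ℝ} (hf : ContinuousOn f (Ici 0)) :
    Continuous (oddExtension f) :=
  (hf.comp_continuous (by fun_prop) fun t => le_max_right t 0).sub
    (hf.comp_continuous (by fun_prop) fun t => le_max_right (-t) 0)

lemma integral_zero_neg_of_odd {g : ℝ → ℝ} (hg : ∀ t, g (-t) = -g t) (u : ℝ) :
    ∫ t in (0 : ℝ)..-u, g t = ∫ t in (0 : ℝ)..u, g t := by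
  have h := intervalIntegral.integral_comp_neg (a := 0) (b := -u) g
  simp only [hg, intervalIntegral.integral_neg, neg_neg, neg_zero] at h
  rw [intervalIntegral.integral_symm 0 u] at h
  linarith

section Calculus

variable {ι : Type*} [Fintype ι]

noncomputable def dotProductCLM (w : ι → ℝ) : (ι → ℝ) →L[ℝ] ℝ :=
  ∑ i, w i • ContinuousLinearMap.proj i

@[simp]
lemma dotProductCLM_apply (w v : ι → ℝ) : dotProductCLM w v = w ⬝ᵥ v := by
  simp [dotProductCLM, dotProduct]

lemma hasStrictFDerivAt_half_dotProduct_mulVec {A : Matrix ι ι ℝ} (hA : A.IsSymm)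
    (y : ι → ℝ) : HasStrictFDerivAt (fun y => y ⬝ᵥ A *ᵥ y / 2) (dotProductCLM (A *ᵥ y)) y := by
  have hrow : ∀ i, HasStrictFDerivAt (fun y => (A *ᵥ y) i) (dotProductCLM (A i)) y := fun i =>
    (dotProductCLM (A i)).hasStrictFDerivAt.congr_of_eventuallyEq
      (Eventually.of_forall fun v => by simp [mulVec])
  have hsum := (HasStrictFDerivAt.fun_sum (u := Finset.univ) fun i _ =>
    (hasStrictFDerivAt_apply i y).mul (hrow i)).mul_const (2⁻¹ : ℝ)
  refine (hsum.congr_of_eventuallyEq (Eventually.of_forall fun v => ?_)).congr_fderiv ?_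
  · simp [dotProduct, div_eq_mul_inv]
  ext v
  have hrows : ∑ i, y i * (A i ⬝ᵥ v) = (A *ᵥ y) ⬝ᵥ v := by
    change y ⬝ᵥ A *ᵥ v = _
    rw [dotProduct_mulVec, ← vecMul_transpose, hA.eq]
  simp only [Finset.sum_add_distrib, smul_add, _root_.add_apply, _root_.smul_apply,
    _root_.sum_apply, dotProductCLM_apply, smul_eq_mul, hrows, ContinuousLinearMap.proj_apply]
  simp only [dotProduct]
  ring

lemma exists_eq_smul_of_isLocalExtrOn_sphere {E : (ι → ℝ) → ℝ} {x w : ι → ℝ} (hx : x ≠ 0)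
    (hE : HasStrictFDerivAt E (dotProductCLM w) x)
    (hextr : IsLocalExtrOn E {y | y ⬝ᵥ y = x ⬝ᵥ x} x) : ∃ c : ℝ, w = c • x := by
  classical
  have hsq : HasStrictFDerivAt (fun y : ι → ℝ => y ⬝ᵥ y / 2) (dotProductCLM x) x := by
    simpa using
      hasStrictFDerivAt_half_dotProduct_mulVec (A := (1 : Matrix ι ι ℝ)) isSymm_one x
  have hset : {y : ι → ℝ | y ⬝ᵥ y = x ⬝ᵥ x} = {y | y ⬝ᵥ y / 2 = x ⬝ᵥ x / 2} := by
    ext y; simp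
  obtain ⟨a, b, hab, h⟩ := (hset ▸ hextr).exists_multipliers_of_hasStrictFDerivAt_1d hsq hE
  have hcoord : ∀ i, a * x i + b * w i = 0 := fun i => by
    simpa using DFunLike.congr_fun h (Pi.single i 1 : ι → ℝ)
  have hb : b ≠ 0 := by
    rintro rfl
    have ha : a ≠ 0 := by simpa using hab
    exact hx (funext fun i => by simpa [ha] using hcoord i)
  refine ⟨-a / b, funext fun i => ?_⟩
  rw [Pi.smul_apply, smul_eq_mul, div_mul_eq_mul_div, eq_div_iff hb]
  linear_combination hcoord i

end Calculus

section Sphere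

variable {ι : Type*} [Fintype ι]

lemma isCompact_dotProduct_self_eq (c : ℝ) : IsCompact {y : ι → ℝ | y ⬝ᵥ y = c} := by
  refine Metric.isCompact_of_isClosed_isBounded
    (isClosed_eq (by simp only [dotProduct]; fun_prop) continuous_const) ?_
  refine (Metric.isBounded_closedBall (x := 0) (r := √c)).subset fun y (hy : y ⬝ᵥ y = c) => ?_
  rw [mem_closedBall_zero_iff, pi_norm_le_iff_of_nonneg (Real.sqrt_nonneg c)]
  refine fun i => (Real.norm_eq_abs _).trans_le (Real.abs_le_sqrt ?_)
  rw [sq, ← hy]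
  exact Finset.single_le_sum (f := fun j => y j * y j) (fun j _ => mul_self_nonneg _)
    (Finset.mem_univ i)

lemma mul_dotProduct_self_le {A : Matrix ι ι ℝ} (hA : A.IsSymm) {μ : ℝ}
    (hμ : ∀ (μ' : ℝ) (x : ι → ℝ), x ≠ 0 → A *ᵥ x = μ' • x → μ ≤ μ') (x : ι → ℝ) :
    μ * (x ⬝ᵥ x) ≤ x ⬝ᵥ A *ᵥ x := by
  rcases eq_or_ne x 0 with rfl | hx
  · simp
  have hcont : Continuous fun y : ι → ℝ => y ⬝ᵥ A *ᵥ y / 2 := by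
    simp only [dotProduct, mulVec]
    fun_prop
  obtain ⟨z, hzx : z ⬝ᵥ z = x ⬝ᵥ x, hzmin⟩ :=
    (isCompact_dotProduct_self_eq (x ⬝ᵥ x)).exists_isMinOn ⟨x, rfl⟩ hcont.continuousOn
  have hz : z ≠ 0 := by
    rintro rfl
    exact hx (dotProduct_self_eq_zero.1 (by simpa using hzx.symm))
  obtain ⟨c, hc⟩ := exists_eq_smul_of_isLocalExtrOn_sphere hz
    (hasStrictFDerivAt_half_dotProduct_mulVec hA z) (Or.inl (hzx ▸ hzmin.localize))
  calc μ * (x ⬝ᵥ x) = μ * (z ⬝ᵥ z) := by rw [hzx]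
    _ ≤ c * (z ⬝ᵥ z) :=
      mul_le_mul_of_nonneg_right (hμ _ z hz hc) (Finset.sum_nonneg fun i _ => mul_self_nonneg _)
    _ = z ⬝ᵥ A *ᵥ z := by rw [hc, dotProduct_smul, smul_eq_mul]
    _ ≤ x ⬝ᵥ A *ᵥ x := by
      have h : z ⬝ᵥ A *ᵥ z / 2 ≤ x ⬝ᵥ A *ᵥ x / 2 := hzmin (show x ⬝ᵥ x = x ⬝ᵥ x from rfl)
      linarith

end Sphere

section Energy

variable {ι : Type*} [Fintype ι]

noncomputable def energy (A : Matrix ι ι ℝ) (g : ι → ℝ → ℝ) (y : ι → ℝ) : ℝ :=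
  y ⬝ᵥ A *ᵥ y / 2 + ∑ i, ∫ t in (0 : ℝ)..y i, g i t

lemma hasStrictFDerivAt_energy {A : Matrix ι ι ℝ} (hA : A.IsSymm) {g : ι → ℝ → ℝ}
    (hg : ∀ i, Continuous (g i)) (y : ι → ℝ) :
    HasStrictFDerivAt (energy A g) (dotProductCLM (A *ᵥ y + fun i => g i (y i))) y := by
  have hprim : ∀ i, HasStrictFDerivAt (fun y : ι → ℝ => ∫ t in (0 : ℝ)..y i, g i t)
      (g i (y i) • ContinuousLinearMap.proj i) y := fun i => by
    have hFTC := intervalIntegral.integral_hasStrictDerivAt_right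
      ((hg i).intervalIntegrable 0 (y i)) ((hg i).stronglyMeasurableAtFilter _ _)
      (hg i).continuousAt
    exact hFTC.comp_hasStrictFDerivAt y
      (ContinuousLinearMap.proj (R := ℝ) (φ := fun _ : ι => ℝ) i).hasStrictFDerivAt
  refine ((hasStrictFDerivAt_half_dotProduct_mulVec hA y).add
    (HasStrictFDerivAt.fun_sum fun i _ => hprim i)).congr_fderiv ?_
  ext v
  simp [dotProductCLM, add_mul, Finset.sum_add_distrib]

lemma continuous_energy {A : Matrix ι ι ℝ} (hA : A.IsSymm) {g : ι → ℝ → ℝ}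
    (hg : ∀ i, Continuous (g i)) : Continuous (energy A g) :=
  continuous_iff_continuousAt.2 fun y => (hasStrictFDerivAt_energy hA hg y).continuousAt

lemma abs_dotProduct_mulVec_abs_le {A : Matrix ι ι ℝ} (hA : ∀ i j, i ≠ j → A i j ≤ 0)
    (y : ι → ℝ) : |y| ⬝ᵥ A *ᵥ |y| ≤ y ⬝ᵥ A *ᵥ y := by
  simp only [dotProduct, mulVec, Finset.mul_sum, Pi.abs_apply]
  refine Finset.sum_le_sum fun i _ => Finset.sum_le_sum fun j _ => ?_
  rcases eq_or_ne i j with rfl | hij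
  · rw [mul_left_comm, abs_mul_abs_self, mul_left_comm]
  · calc |y i| * (A i j * |y j|) = A i j * |y i * y j| := by rw [abs_mul]; ring
      _ ≤ A i j * (y i * y j) := mul_le_mul_of_nonpos_left (le_abs_self _) (hA i j hij)
      _ = y i * (A i j * y j) := by ring

lemma energy_abs_le {A : Matrix ι ι ℝ} (hA : ∀ i j, i ≠ j → A i j ≤ 0) {g : ι → ℝ → ℝ}
    (hg : ∀ i t, g i (-t) = -g i t) (y : ι → ℝ) : energy A g |y| ≤ energy A g y := by
  have hprim : ∀ i, ∫ t in (0 : ℝ)..|y i|, g i t = ∫ t in (0 : ℝ)..y i, g i t := fun i => by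
    rcases abs_choice (y i) with h | h <;> rw [h]
    exact integral_zero_neg_of_odd (hg i) _
  simp only [energy, Pi.abs_apply, hprim]
  linarith [abs_dotProduct_mulVec_abs_le hA y]

end Energy

section ZMatrix

variable {ι : Type*} [Fintype ι] {A : Matrix ι ι ℝ}

lemma pos_of_irreducible
    (hirr : ∀ S : Set ι, S.Nonempty → S ≠ univ → ∃ i ∈ S, ∃ j, j ∉ S ∧ A i j ≠ 0)
    (hA : ∀ i j, i ≠ j → A i j ≤ 0) {x : ι → ℝ} (hx : 0 ≤ x) (hx0 : x ≠ 0)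
    (hAx : ∀ i, x i = 0 → 0 ≤ (A *ᵥ x) i) (i : ι) : 0 < x i := by
  by_contra hi
  have hzero : x i = 0 := le_antisymm (not_lt.1 hi) (hx i)
  have hS : {k | x k = 0} ≠ univ := fun h => hx0 (funext fun k => (h ▸ mem_univ k :))
  obtain ⟨k, hk : x k = 0, j, hj : x j ≠ 0, hkj⟩ := hirr {k | x k = 0} ⟨i, hzero⟩ hS
  have hjk : k ≠ j := fun h => hj (h ▸ hk)
  have hneg : (A *ᵥ x) k < 0 := by
    refine Finset.sum_neg' (fun l _ => ?_) ⟨j, Finset.mem_univ j, ?_⟩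
    · rcases eq_or_ne k l with rfl | hkl
      · simp [hk]
      · exact mul_nonpos_of_nonpos_of_nonneg (hA k l hkl) (hx l)
    · exact mul_neg_of_neg_of_pos ((hA k j hjk).lt_of_ne hkj) ((hx j).lt_of_ne' hj)
  exact (hAx k hk).not_gt hneg

lemma mulVec_apply_le_of_le_of_eq (hA : ∀ i j, i ≠ j → A i j ≤ 0) {x z : ι → ℝ} (hxz : x ≤ z)
    {k : ι} (hk : x k = z k) : (A *ᵥ z) k ≤ (A *ᵥ x) k := by
  refine Finset.sum_le_sum fun j _ => ?_
  rcases eq_or_ne k j with rfl | hkj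
  · rw [hk]
  · exact mul_le_mul_of_nonpos_left (hxz j) (hA k j hkj)

end ZMatrix

section Existence

variable {ι : Type*} [Fintype ι] [Nonempty ι] {A : Matrix ι ι ℝ}

theorem exists_pos_mulVec_add_eq_smul (hA : A.IsSymm) (hoff : ∀ i j, i ≠ j → A i j ≤ 0)
    (hirr : ∀ S : Set ι, S.Nonempty → S ≠ univ → ∃ i ∈ S, ∃ j, j ∉ S ∧ A i j ≠ 0)
    {f : ι → ℝ → ℝ} (hf : ∀ i, ContinuousOn (f i) (Ici 0)) (hf0 : ∀ i, f i 0 = 0)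
    {c : ℝ} (hc : 0 < c) :
    ∃ (lam : ℝ) (x : ι → ℝ), (∀ i, 0 < x i) ∧
      A *ᵥ x + (fun i => f i (x i)) = lam • x ∧ x ⬝ᵥ x = c := by
  classical
  set g : ι → ℝ → ℝ := fun i => oddExtension (f i)
  have hg : ∀ i, Continuous (g i) := fun i => continuous_oddExtension (hf i)
  obtain ⟨i₀⟩ := ‹Nonempty ι›
  have hne : {y : ι → ℝ | y ⬝ᵥ y = c}.Nonempty :=
    ⟨Pi.single i₀ √c, by simp [Real.mul_self_sqrt hc.le]⟩
  obtain ⟨x₀, hx₀ : x₀ ⬝ᵥ x₀ = c, hmin⟩ :=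
    (isCompact_dotProduct_self_eq c).exists_isMinOn hne (continuous_energy hA hg).continuousOn
  set x := |x₀|
  have hxx : x ⬝ᵥ x = c := by simpa [x, dotProduct, abs_mul_abs_self] using hx₀
  have hxmin : IsMinOn (energy A g) {y | y ⬝ᵥ y = x ⬝ᵥ x} x := fun y hy =>
    (energy_abs_le hoff (fun i => oddExtension_neg (f i)) x₀).trans (hmin (hy.trans hxx))
  have hx0 : x ≠ 0 := by
    intro h
    rw [h, zero_dotProduct] at hxx
    exact hc.ne hxx
  obtain ⟨lam, hlam⟩ := exists_eq_smul_of_isLocalExtrOn_sphere hx0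
    (hasStrictFDerivAt_energy hA hg x) (Or.inl hxmin.localize)
  have hgx : (fun i => g i (x i)) = fun i => f i (x i) :=
    funext fun i => oddExtension_of_nonneg (hf0 i) (abs_nonneg _)
  rw [hgx] at hlam
  refine ⟨lam, x, pos_of_irreducible hirr hoff (fun i => abs_nonneg _) hx0 fun i hi => ?_,
    hlam, hxx⟩
  have := congrFun hlam i
  simp only [Pi.add_apply, Pi.smul_apply, smul_eq_mul, hi, hf0, mul_zero, add_zero] at this
  exact this.ge

theorem lt_of_mulVec_add_eq_smul (hA : A.IsSymm) {μ : ℝ}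
    (hμ : ∀ (μ' : ℝ) (x : ι → ℝ), x ≠ 0 → A *ᵥ x = μ' • x → μ ≤ μ')
    {f : ι → ℝ → ℝ} (hfpos : ∀ i t, 0 < t → 0 < f i t) {lam : ℝ} {x : ι → ℝ}
    (hx : ∀ i, 0 < x i) (hsol : A *ᵥ x + (fun i => f i (x i)) = lam • x) : μ < lam := by
  have hxx : 0 < x ⬝ᵥ x :=
    Finset.sum_pos (fun i _ => mul_pos (hx i) (hx i)) Finset.univ_nonempty
  have hfx : 0 < (fun i => f i (x i)) ⬝ᵥ x :=
    Finset.sum_pos (fun i _ => mul_pos (hfpos i _ (hx i)) (hx i)) Finset.univ_nonempty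
  have hlam : x ⬝ᵥ A *ᵥ x + (fun i => f i (x i)) ⬝ᵥ x = lam * (x ⬝ᵥ x) := by
    rw [dotProduct_comm x, ← add_dotProduct, hsol, smul_dotProduct, smul_eq_mul]
  have hμx := mul_dotProduct_self_le hA hμ x
  exact lt_of_mul_lt_mul_right (by linarith) hxx.le

end Existence

section Comparison

variable {ι : Type*} [Fintype ι] [Nonempty ι] {A : Matrix ι ι ℝ} {f : ι → ℝ → ℝ}
  {lam lam' : ℝ} {x y : ι → ℝ}

lemma exists_max_ratio_le (hoff : ∀ i j, i ≠ j → A i j ≤ 0) (hx : ∀ i, 0 < x i)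
    (hy : ∀ i, 0 < y i) (hsx : A *ᵥ x + (fun i => f i (x i)) = lam • x)
    (hsy : A *ᵥ y + (fun i => f i (y i)) = lam' • y) :
    ∃ k t, 0 < t ∧ x ≤ t • y ∧ (lam' - lam) * x k + f k (t * y k) ≤ t * f k (y k) := by
  obtain ⟨k, -, hk⟩ := Finset.exists_max_image Finset.univ (fun i => x i / y i)
    Finset.univ_nonempty
  set t := x k / y k
  have hxk : x k = t * y k := (div_mul_cancel₀ _ (hy k).ne').symm
  have hle : x ≤ t • y := fun i => (div_le_iff₀ (hy i)).1 (hk i (Finset.mem_univ i))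
  have hAk : t * (A *ᵥ y) k ≤ (A *ᵥ x) k := by
    simpa [mulVec_smul] using mulVec_apply_le_of_le_of_eq hoff hle (by simpa using hxk)
  have hex := congrFun hsx k
  have hey := congrFun hsy k
  simp only [Pi.add_apply, Pi.smul_apply, smul_eq_mul] at hex hey
  refine ⟨k, t, div_pos (hx k) (hy k), hle, ?_⟩
  rw [← hxk]
  linear_combination hex - t * hey + lam' * hxk + hAk

variable (hoff : ∀ i j, i ≠ j → A i j ≤ 0)
  (hf : ∀ i, StrictMonoOn (fun t => f i t / t) (Ioi 0)) (hx : ∀ i, 0 < x i) (hy : ∀ i, 0 < y i)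
  (hsx : A *ᵥ x + (fun i => f i (x i)) = lam • x)
  (hsy : A *ᵥ y + (fun i => f i (y i)) = lam' • y)
include hoff hf hx hy hsx hsy

lemma le_of_le_of_mulVec_add_eq_smul (hlam : lam ≤ lam') : x ≤ y := by
  obtain ⟨k, t, ht, hle, hk⟩ := exists_max_ratio_le hoff hx hy hsx hsy
  have ht1 : t ≤ 1 := (apply_mul_le_mul_apply_iff (hf k) (hy k) ht).1 <| by
    nlinarith [hx k]
  exact fun i => (hle i).trans (mul_le_of_le_one_left (hy i).le ht1)

lemma lt_of_lt_of_mulVec_add_eq_smul (hlam : lam < lam') (i : ι) : x i < y i := by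
  obtain ⟨k, t, ht, hle, hk⟩ := exists_max_ratio_le hoff hx hy hsx hsy
  have ht1 : t < 1 := (apply_mul_lt_mul_apply_iff (hf k) (hy k) ht).1 <| by
    nlinarith [hx k]
  exact (hle i).trans_lt (mul_lt_of_lt_one_left (hy i) ht1)

end Comparison

theorem eq_of_mulVec_add_eq_smul {ι : Type*} [Fintype ι] [Nonempty ι] {A : Matrix ι ι ℝ}
    (hoff : ∀ i j, i ≠ j → A i j ≤ 0) {f : ι → ℝ → ℝ}
    (hf : ∀ i, StrictMonoOn (fun t => f i t / t) (Ioi 0)) {lam lam' : ℝ} {x y : ι → ℝ}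
    (hx : ∀ i, 0 < x i) (hy : ∀ i, 0 < y i) (hsx : A *ᵥ x + (fun i => f i (x i)) = lam • x)
    (hsy : A *ᵥ y + (fun i => f i (y i)) = lam' • y) (hxy : x ⬝ᵥ x = y ⬝ᵥ y) :
    lam = lam' ∧ x = y := by
  have hlam : lam = lam' := by
    by_contra hne
    rcases lt_or_gt_of_ne hne with h | h
    · refine hxy.not_lt (Finset.sum_lt_sum_of_nonempty Finset.univ_nonempty fun i _ => ?_)
      exact mul_self_lt_mul_self (hx i).le
        (lt_of_lt_of_mulVec_add_eq_smul hoff hf hx hy hsx hsy h i)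
    · refine hxy.not_gt (Finset.sum_lt_sum_of_nonempty Finset.univ_nonempty fun i _ => ?_)
      exact mul_self_lt_mul_self (hy i).le
        (lt_of_lt_of_mulVec_add_eq_smul hoff hf hy hx hsy hsx h i)
  subst hlam
  exact ⟨rfl, le_antisymm (le_of_le_of_mulVec_add_eq_smul hoff hf hx hy hsx hsy le_rfl)
    (le_of_le_of_mulVec_add_eq_smul hoff hf hy hx hsy hsx le_rfl)⟩

theorem stmt_5 (n : ℕ) (hn : 1 ≤ n) (A : Matrix (Fin n) (Fin n) ℝ)
    (hA_irred : ∀ S : Set (Fin n), S.Nonempty → S ≠ Set.univ →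
      ∃ i ∈ S, ∃ j, j ∉ S ∧ A i j ≠ 0)
    (hA_posdef : A.PosDef)
    (hA_offdiag : ∀ i j : Fin n, i ≠ j → A i j ≤ 0)
    (μ : ℝ)
    (hμ_min : ∀ (μ' : ℝ) (x : Fin n → ℝ), x ≠ 0 → A.mulVec x = μ' • x → μ ≤ μ')
    (f : Fin n → ℝ → ℝ)
    (hf_map : ∀ i t, 0 ≤ t → 0 ≤ f i t)
    (hf_smooth : ∀ i, ContDiffOn ℝ 1 (f i) (Set.Ici 0))
    (hf_lim0 : ∀ i, Filter.Tendsto (fun t => f i t / t) (nhdsWithin 0 (Set.Ioi 0)) (nhds 0))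
    (hf_mono : ∀ (i : Fin n) (s t : ℝ), 0 < s → s < t → f i s / s < f i t / t)
    (r : ℝ) (hr : 0 < r) :
    ∃! p : ℝ × (Fin n → ℝ), μ < p.1 ∧ (∀ i, 0 < p.2 i) ∧
      A.mulVec p.2 + (fun i => f i (p.2 i)) = p.1 • p.2 ∧
      Real.sqrt (∑ i, p.2 i ^ 2) = r := by
  have : Nonempty (Fin n) := ⟨⟨0, hn⟩⟩
  have hA : A.IsSymm := isHermitian_iff_isSymm.1 hA_posdef.isHermitian
  have hcont : ∀ i, ContinuousOn (f i) (Ici 0) := fun i => (hf_smooth i).continuousOn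
  have hf0 : ∀ i, f i 0 = 0 := fun i => apply_zero_eq_zero_of_tendsto_div
    ((hcont i 0 self_mem_Ici).mono Ioi_subset_Ici_self) (hf_lim0 i)
  have hmono : ∀ i, StrictMonoOn (fun t => f i t / t) (Ioi 0) :=
    fun i s hs t _ hst => hf_mono i s t hs hst
  have hnorm : ∀ x : Fin n → ℝ, √(∑ i, x i ^ 2) = r ↔ x ⬝ᵥ x = r * r := fun x => by
    rw [Real.sqrt_eq_iff_mul_self_eq_of_pos hr, eq_comm]
    simp [dotProduct, sq]
  obtain ⟨lam, x, hx, hsol, hxx⟩ :=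
    exists_pos_mulVec_add_eq_smul hA hA_offdiag hA_irred hcont hf0 (mul_pos hr hr)
  have hlam : μ < lam := lt_of_mulVec_add_eq_smul hA hμ_min
    (fun i _ ht => pos_of_strictMonoOn_div (hmono i) (hf_map i) ht) hx hsol
  refine ⟨(lam, x), ⟨hlam, hx, hsol, (hnorm x).2 hxx⟩, ?_⟩
  rintro ⟨lam', y⟩ ⟨-, hy, hsoly, hyy⟩
  obtain ⟨rfl, rfl⟩ := eq_of_mulVec_add_eq_smul hA_offdiag hmono hy hx hsoly hsol
    (((hnorm y).1 hyy).trans hxx.symm)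
  rfl
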